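/- Let G be an undirected connected graph with nonnegative edge weights, s a start vertex with col(s) = ∅, and let w' denote the shortest-path metric of G. Define a table T over pairs (v, S) with v ∈ V \ {s} and S ⊆ C by T[v, S] = ∞ if S ∩ col(v) = ∅, and otherwise T[v, S] = min over u ∈ V (including u = s) of T[u, S \ col(v)] + w'(u, v), with base cases T[s, ∅] = 0 and T[s, S] = ∞ for S ≠ ∅. Then for every v and S with S ∩ col(v) ≠ ∅, T[v, S] equals the minimum weight of a walk in G from s to v that collects all colors in S. -/

import Mathlib

/-!
The recurrence determines `T` uniquely, by induction on `S`, since `S \ col v ⊊ S` whenever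
`S` meets `col v`. The optimal walk weights (with `0`/`⊤` at the start vertex and `⊤` where `v`
carries no color of `S`) satisfy the same recurrence: concatenating a walk `s ⇝ u` with a walk
`u ⇝ v` gives one inequality, and cutting a walk `s ⇝ v` right after the first vertex at which it
has collected all of `S \ col v` gives the other. This vertex is not `s`, because `col s = ∅`.
-/

open scoped ENNReal

/-- Weight of a walk (ℝ≥0∞-valued): sum of weights of consecutive pairs. Non-edges may be
encoded by weight `⊤`. -/
noncomputable def walkWeightE {V : Type*} (w : V → V → ℝ≥0∞) : List V → ℝ≥0∞
  | [] => 0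
  | [_] => 0
  | a :: b :: rest => w a b + walkWeightE w (b :: rest)

/-- The set of colors collected by a walk. -/
def collected {V C : Type*} [DecidableEq C] (col : V → Finset C) (p : List V) : Finset C :=
  p.foldr (fun v acc => col v ∪ acc) ∅

section Walks

variable {V C : Type*} [DecidableEq C]

lemma collected_cons (col : V → Finset C) (a : V) (p : List V) :
    collected col (a :: p) = col a ∪ collected col p := rfl

lemma collected_append (col : V → Finset C) (p q : List V) :
    collected col (p ++ q) = collected col p ∪ collected col q := by
  induction p with
  | nil => simp [collected]
  | cons a p ih => simp [collected_cons, ih, Finset.union_assoc]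

lemma col_subset_collected (col : V → Finset C) {a : V} {p : List V} (h : a ∈ p) :
    col a ⊆ collected col p := by
  induction p with
  | nil => simp at h
  | cons b p ih =>
    rw [collected_cons]
    rcases List.mem_cons.1 h with rfl | h
    · exact Finset.subset_union_left
    · exact (ih h).trans Finset.subset_union_right

lemma walkWeightE_append (w : V → V → ℝ≥0∞) :
    ∀ {p : List V} {u : V} (q : List V), p.getLast? = some u →
      walkWeightE w (p ++ q) = walkWeightE w p + walkWeightE w (u :: q)
  | [], _, _, h => by simp at h
  | [a], _, _, h => by
    obtain rfl : a = _ := Option.some.inj h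
    simp [walkWeightE]
  | a :: b :: rest, _, q, h => by
    rw [List.getLast?_cons_cons] at h
    have ih := walkWeightE_append w q h
    rw [List.cons_append] at ih
    simp only [List.cons_append, walkWeightE]
    rw [ih, add_assoc]

lemma getLast?_append_of_getLast? {p q : List V} {u v : V} (hp : p.getLast? = some u)
    (hq : (u :: q).getLast? = some v) : (p ++ q).getLast? = some v := by
  cases q with
  | nil => simp_all
  | cons b q => rwa [List.getLast?_append_cons, ← List.getLast?_cons_cons (a := u)]

lemma exists_eq_append_cons_of_subset_collected (col : V → Finset C) {X : Finset C}
    (hX : X.Nonempty) {p : List V} (hp : X ⊆ collected col p) :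
    ∃ p₁ u q, p = p₁ ++ u :: q ∧ X ⊆ collected col (p₁ ++ [u]) ∧ (X ∩ col u).Nonempty := by
  induction p using List.reverseRecOn with
  | nil => simp [collected, hX.ne_empty] at hp
  | append_singleton p a ih =>
    by_cases ha : (X ∩ col a).Nonempty
    · exact ⟨p, a, [], rfl, hp, ha⟩
    · have hXp : X ⊆ collected col p := by
        intro c hc
        have := hp hc
        rw [collected_append, Finset.mem_union] at this
        exact this.resolve_right fun hca =>
          ha ⟨c, Finset.mem_inter.2 ⟨hc, by simpa [collected] using hca⟩⟩
      obtain ⟨p₁, u, q, rfl, hXu, hu⟩ := ih hXp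
      exact ⟨p₁, u, q ++ [a], by simp, hXu, hu⟩

end Walks

structure IsInspectionTable {V C : Type*} [DecidableEq C] (col : V → Finset C) (s : V) (d : V → V → ℝ≥0∞)
    (T : V → Finset C → ℝ≥0∞) : Prop where
  start_empty : T s ∅ = 0
  start_nonempty : ∀ S : Finset C, S ≠ ∅ → T s S = ⊤
  of_inter_eq_empty : ∀ v S, v ≠ s → S ∩ col v = ∅ → T v S = ⊤
  eq_iInf : ∀ v S, v ≠ s → S ∩ col v ≠ ∅ → T v S = ⨅ u, T u (S \ col v) + d u v

namespace IsInspectionTable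

variable {V C : Type*} [DecidableEq C] {col : V → Finset C} {s : V} {d : V → V → ℝ≥0∞}

theorem unique {T₁ T₂ : V → Finset C → ℝ≥0∞} (h₁ : IsInspectionTable col s d T₁)
    (h₂ : IsInspectionTable col s d T₂) : T₁ = T₂ := by
  funext v S
  induction S using Finset.strongInduction generalizing v with
  | H S ih =>
  by_cases hv : v = s
  · subst hv
    by_cases hS : S = ∅
    · rw [hS, h₁.start_empty, h₂.start_empty]
    · rw [h₁.start_nonempty S hS, h₂.start_nonempty S hS]
  by_cases hSv : S ∩ col v = ∅
  · rw [h₁.of_inter_eq_empty v S hv hSv, h₂.of_inter_eq_empty v S hv hSv]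
  have hlt : S \ col v ⊂ S := by
    rw [← Finset.sdiff_inter_self_left]
    exact Finset.sdiff_ssubset Finset.inter_subset_left (Finset.nonempty_iff_ne_empty.2 hSv)
  rw [h₁.eq_iInf v S hv hSv, h₂.eq_iInf v S hv hSv]
  simp only [ih _ hlt]

end IsInspectionTable

noncomputable def walkDist {V : Type*} (w : V → V → ℝ≥0∞) (u v : V) : ℝ≥0∞ :=
  sInf {x | ∃ p : List V, p.head? = some u ∧ p.getLast? = some v ∧ walkWeightE w p = x}

lemma walkDist_le_walkWeightE {V : Type*} (w : V → V → ℝ≥0∞) {p : List V} {u v : V}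
    (hu : p.head? = some u) (hv : p.getLast? = some v) : walkDist w u v ≤ walkWeightE w p :=
  sInf_le ⟨p, hu, hv, rfl⟩

section Optimum

variable {V C : Type*} [DecidableEq C] (w : V → V → ℝ≥0∞) (col : V → Finset C) (s : V)

noncomputable def minCollectingWeight (v : V) (S : Finset C) : ℝ≥0∞ :=
  sInf {x | ∃ p : List V, p.head? = some s ∧ p.getLast? = some v ∧
    S ⊆ collected col p ∧ walkWeightE w p = x}

variable {w col s} in
lemma minCollectingWeight_le_walkWeightE {p : List V} {v : V} {S : Finset C}
    (hs : p.head? = some s) (hv : p.getLast? = some v) (hS : S ⊆ collected col p) :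
    minCollectingWeight w col s v S ≤ walkWeightE w p :=
  sInf_le ⟨p, hs, hv, hS, rfl⟩

lemma minCollectingWeight_le_add_walkDist (u v : V) (S : Finset C) :
    minCollectingWeight w col s v S ≤
      minCollectingWeight w col s u (S \ col v) + walkDist w u v := by
  unfold minCollectingWeight walkDist
  rw [ENNReal.sInf_add]
  refine le_iInf₂ ?_
  rintro _ ⟨p, hps, hpu, hpS, rfl⟩
  rw [add_comm, ENNReal.sInf_add]
  refine le_iInf₂ ?_
  rintro _ ⟨_ | ⟨a, q⟩, hqu, hqv, rfl⟩
  · simp at hqu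
  obtain rfl : a = u := Option.some.inj hqu
  have hv : (p ++ q).getLast? = some v := getLast?_append_of_getLast? hpu hqv
  refine sInf_le ⟨p ++ q, ?_, hv, ?_, by rw [walkWeightE_append w q hpu, add_comm]⟩
  · cases p with
    | nil => simp at hps
    | cons b p => exact hps
  · have hvcol := col_subset_collected col (List.mem_of_getLast? hv)
    intro c hc
    by_cases hcv : c ∈ col v
    · exact hvcol hcv
    · rw [collected_append]
      exact Finset.mem_union_left _ (hpS (Finset.mem_sdiff.2 ⟨hc, hcv⟩))

open Classical in
noncomputable def inspectionOptTable (v : V) (S : Finset C) : ℝ≥0∞ :=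
  if v = s then (if S = ∅ then 0 else ⊤)
  else if S ∩ col v = ∅ then ⊤ else minCollectingWeight w col s v S

lemma minCollectingWeight_le_inspectionOptTable (v : V) (S : Finset C) :
    minCollectingWeight w col s v S ≤ inspectionOptTable w col s v S := by
  unfold inspectionOptTable
  split_ifs with hv hS
  · subst hv hS
    exact minCollectingWeight_le_walkWeightE (p := [v]) rfl rfl (Finset.empty_subset _)
  all_goals simp

lemma exists_inspectionOptTable_add_walkDist_le (hcols : col s = ∅) {p : List V} {v : V}
    {S : Finset C} (hps : p.head? = some s) (hpv : p.getLast? = some v)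
    (hpS : S ⊆ collected col p) :
    ∃ u, inspectionOptTable w col s u (S \ col v) + walkDist w u v ≤ walkWeightE w p := by
  by_cases hX : S \ col v = ∅
  · exact ⟨s, by simpa [inspectionOptTable, hX] using walkDist_le_walkWeightE w hps hpv⟩
  obtain ⟨p₁, u, q, rfl, hXu, hu⟩ := exists_eq_append_cons_of_subset_collected col
    (Finset.nonempty_iff_ne_empty.2 hX) (Finset.sdiff_subset.trans hpS)
  have hus : u ≠ s := by
    rintro rfl
    simp [hcols] at hu
  have hp₁u : (p₁ ++ [u]).getLast? = some u := by simp
  have hp₁s : (p₁ ++ [u]).head? = some s := by cases p₁ <;> exact hps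
  refine ⟨u, ?_⟩
  rw [inspectionOptTable, if_neg hus, if_neg (Finset.nonempty_iff_ne_empty.1 hu),
    ← List.singleton_append, ← List.append_assoc, walkWeightE_append w q hp₁u]
  exact add_le_add (minCollectingWeight_le_walkWeightE hp₁s hp₁u hXu)
    (walkDist_le_walkWeightE w (p := u :: q) rfl (by simpa using hpv))

lemma minCollectingWeight_eq_iInf (hcols : col s = ∅) (v : V) (S : Finset C) :
    minCollectingWeight w col s v S =
      ⨅ u, inspectionOptTable w col s u (S \ col v) + walkDist w u v := by
  refine le_antisymm (le_iInf fun u => ?_) (le_sInf ?_)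
  · exact (minCollectingWeight_le_add_walkDist w col s u v S).trans
      (add_le_add (minCollectingWeight_le_inspectionOptTable w col s u _) le_rfl)
  · rintro _ ⟨p, hps, hpv, hpS, rfl⟩
    obtain ⟨u, hu⟩ := exists_inspectionOptTable_add_walkDist_le w col s hcols hps hpv hpS
    exact (iInf_le _ u).trans hu

theorem isInspectionTable_inspectionOptTable (hcols : col s = ∅) :
    IsInspectionTable col s (walkDist w) (inspectionOptTable w col s) where
  start_empty := by simp [inspectionOptTable]
  start_nonempty S hS := by simp [inspectionOptTable, hS]
  of_inter_eq_empty v S hv hSv := by simp [inspectionOptTable, hv, hSv]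
  eq_iInf v S hv hSv := by
    rw [← minCollectingWeight_eq_iInf w col s hcols]
    simp [inspectionOptTable, hv, hSv]

end Optimum

theorem stmt10_general {V C : Type*} [DecidableEq C]
    (w : V → V → ℝ≥0∞)
    (col : V → Finset C) (s : V) (hcols : col s = ∅)
    (w' : V → V → ℝ≥0∞)
    (hw' : ∀ u v, w' u v = sInf {x | ∃ p : List V,
        p.head? = some u ∧ p.getLast? = some v ∧ walkWeightE w p = x})
    (T : V → Finset C → ℝ≥0∞)
    (hTs0 : T s ∅ = 0)
    (hTs : ∀ S : Finset C, S ≠ ∅ → T s S = ⊤)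
    (hT1 : ∀ (v : V) (S : Finset C), v ≠ s → S ∩ col v = ∅ → T v S = ⊤)
    (hT2 : ∀ (v : V) (S : Finset C), v ≠ s → S ∩ col v ≠ ∅ →
        T v S = ⨅ u : V, T u (S \ col v) + w' u v) :
    ∀ (v : V) (S : Finset C), v ≠ s → S ∩ col v ≠ ∅ →
      T v S = sInf {x | ∃ p : List V, p.head? = some s ∧ p.getLast? = some v ∧
        S ⊆ collected col p ∧ walkWeightE w p = x} := by
  obtain rfl : w' = walkDist w := funext₂ hw'
  have hT : IsInspectionTable col s (walkDist w) T := ⟨hTs0, hTs, hT1, hT2⟩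
  rw [hT.unique (isInspectionTable_inspectionOptTable w col s hcols)]
  intro v S hv hSv
  simp [inspectionOptTable, hv, hSv, minCollectingWeight]

/-- correctness of the Graph Inspection dynamic program. If `T` satisfies the
DP recurrence over the shortest-path metric `w'` of a connected graph (encoded by
`w : V → V → ℝ≥0∞`, with `⊤` on non-edges) and `col s = ∅`, then for every `v ≠ s` and
`S` with `S ∩ col v ≠ ∅`, `T v S` is the minimum weight of a walk in `G` from `s` to `v`
collecting all colors in `S`. -/
theorem stmt10 {V C : Type*} [DecidableEq C]
    (w : V → V → ℝ≥0∞) (hwsymm : ∀ u v, w u v = w v u)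
    (col : V → Finset C) (s : V) (hcols : col s = ∅)
    (w' : V → V → ℝ≥0∞)
    (hw' : ∀ u v, w' u v = sInf {x | ∃ p : List V,
        p.head? = some u ∧ p.getLast? = some v ∧ walkWeightE w p = x})
    (hconnW : ∀ u v, w' u v ≠ ⊤)
    (T : V → Finset C → ℝ≥0∞)
    (hTs0 : T s ∅ = 0)
    (hTs : ∀ S : Finset C, S ≠ ∅ → T s S = ⊤)
    (hT1 : ∀ (v : V) (S : Finset C), v ≠ s → S ∩ col v = ∅ → T v S = ⊤)
    (hT2 : ∀ (v : V) (S : Finset C), v ≠ s → S ∩ col v ≠ ∅ →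
        T v S = ⨅ u : V, T u (S \ col v) + w' u v) :
    ∀ (v : V) (S : Finset C), v ≠ s → S ∩ col v ≠ ∅ →
      T v S = sInf {x | ∃ p : List V, p.head? = some s ∧ p.getLast? = some v ∧
        S ⊆ collected col p ∧ walkWeightE w p = x} :=
  stmt10_general w col s hcols w' hw' T hTs0 hTs hT1 hT2
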